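/- arXiv:1912.08762 — 3 statements merged into one kernel-verified Lean document; each statement's English description precedes it below -/
import Mathlib

section
/- Let ω : (0,1] → ℝ≥0 be a Dini function, i.e. ∫_0^1 ω(t)/t dt < ∞, and additionally assume ω is bounded on (0,1]. Fix κ ∈ (0,1) and β ∈ (0,1), and define ω̃(t) = Σ_{i=1}^∞ κ^{iβ} · (ω(κ^{-i}t) if κ^{-i}t ≤ 1, else ω(1)). Then ω̃ is finite for every t ∈ (0,1] and ∫_0^1 ω̃(t)/t dt < ∞, i.e. ω̃ is again a Dini function. -/
open MeasureTheory Set Filter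

lemma integrable_tsum_aux {α : Type*} [MeasurableSpace α] {μ : Measure α}
    {F : ℕ → α → ℝ} (hF_int : ∀ i, Integrable (F i) μ)
    (hF_sum : Summable fun i => ∫ a, ‖F i a‖ ∂μ) :
    Integrable (fun a => ∑' i, F i a) μ := by
  have hlin : ∀ i, ∫⁻ a, ‖F i a‖₊ ∂μ = ENNReal.ofReal (∫ a, ‖F i a‖ ∂μ) := by
    intro i
    simp_rw [← enorm_eq_nnnorm, ← ofReal_norm]
    rw [← ofReal_integral_eq_lintegral_ofReal (hF_int i).norm
      (Eventually.of_forall fun a => norm_nonneg _)]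
  have key : ∑' i, ∫⁻ a, (‖F i a‖₊ : ENNReal) ∂μ ≠ ⊤ := by
    simp_rw [hlin]
    rw [← ENNReal.ofReal_tsum_of_nonneg (fun i => integral_nonneg fun a => norm_nonneg _) hF_sum]
    exact ENNReal.ofReal_ne_top
  have hG : ∫⁻ a, ∑' i, (‖F i a‖₊ : ENNReal) ∂μ ≠ ⊤ := by
    rw [lintegral_tsum fun i => (hF_int i).1.aemeasurable.nnnorm.coe_nnreal_ennreal]; exact key
  have haes : ∀ᵐ a ∂μ, Summable fun i => ‖F i a‖ := by
    filter_upwards [ae_lt_top' (AEMeasurable.ennreal_tsum fun i => (hF_int i).1.enorm)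
      hG] with a ha
    have h2 : Summable fun i => ‖F i a‖₊ := ENNReal.tsum_coe_ne_top_iff_summable.1 ha.ne
    simpa [coe_nnnorm] using NNReal.summable_coe.2 h2
  have hmeas : AEStronglyMeasurable (fun a => ∑' i, F i a) μ := by
    apply aestronglyMeasurable_of_tendsto_ae (atTop : Filter ℕ)
      (f := fun n => fun a => ∑ i ∈ Finset.range n, F i a)
    · exact fun n => (Finset.range n).aestronglyMeasurable_fun_sum fun i _ => (hF_int i).1
    · filter_upwards [haes] with a ha
      exact ha.of_norm.hasSum.tendsto_sum_nat
  refine ⟨hmeas, ?_⟩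
  rw [HasFiniteIntegral]
  refine lt_of_le_of_lt (lintegral_mono_ae ?_) hG.lt_top
  filter_upwards [haes] with a ha
  have hnn : Summable fun i => ‖F i a‖₊ := by
    rw [← NNReal.summable_coe]; simpa [coe_nnnorm] using ha
  calc (‖∑' i, F i a‖₊ : ENNReal) ≤ ((∑' i, ‖F i a‖₊ : NNReal) : ENNReal) := by
        exact_mod_cast nnnorm_tsum_le hnn
    _ = ∑' i, (‖F i a‖₊ : ENNReal) := ENNReal.coe_tsum hnn

set_option maxHeartbeats 1000000 in
theorem stmt1 (ω : ℝ → ℝ) (κ β : ℝ) (hκ : κ ∈ Ioo (0:ℝ) 1) (hβ : β ∈ Ioo (0:ℝ) 1)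
    (hnonneg : ∀ t ∈ Ioc (0:ℝ) 1, 0 ≤ ω t)
    (hDini : IntegrableOn (fun t => ω t / t) (Ioc 0 1))
    (M : ℝ) (hbdd : ∀ t ∈ Ioc (0:ℝ) 1, ω t ≤ M)
    (ωt : ℝ → ℝ)
    (hωt : ∀ t, ωt t = ∑' i : ℕ, κ ^ (((i : ℝ) + 1) * β) *
      (if t / κ ^ (i + 1) ≤ 1 then ω (t / κ ^ (i + 1)) else ω 1)) :
    (∀ t ∈ Ioc (0:ℝ) 1, Summable (fun i : ℕ => κ ^ (((i : ℝ) + 1) * β) *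
      (if t / κ ^ (i + 1) ≤ 1 then ω (t / κ ^ (i + 1)) else ω 1))) ∧
    IntegrableOn (fun t => ωt t / t) (Ioc 0 1) := by
  obtain ⟨hκ0, hκ1⟩ := hκ
  obtain ⟨hβ0, hβ1⟩ := hβ
  have hω1 : 0 ≤ ω 1 := hnonneg 1 ⟨one_pos, le_refl 1⟩
  have hM0 : 0 ≤ M := hω1.trans (hbdd 1 ⟨one_pos, le_refl 1⟩)
  set r := κ ^ β with hr
  have hr0 : 0 < r := Real.rpow_pos_of_pos hκ0 β
  have hr1 : r < 1 := Real.rpow_lt_one hκ0.le hκ1 hβ0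
  have hpow : ∀ i : ℕ, κ ^ (((i : ℝ) + 1) * β) = r ^ (i + 1) := by
    intro i
    have h1 : ((i : ℝ) + 1) = ((i + 1 : ℕ) : ℝ) := by push_cast; ring
    rw [hr, mul_comm, Real.rpow_mul hκ0.le, h1, Real.rpow_natCast]
  -- the generic term
  set g : ℕ → ℝ → ℝ := fun i t =>
    κ ^ (((i : ℝ) + 1) * β) * (if t / κ ^ (i + 1) ≤ 1 then ω (t / κ ^ (i + 1)) else ω 1)
    with hg
  have hc0 : ∀ i : ℕ, (0:ℝ) < κ ^ (i + 1) := fun i => pow_pos hκ0 _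
  have hc1 : ∀ i : ℕ, κ ^ (i + 1) ≤ 1 := fun i => pow_le_one₀ hκ0.le hκ1.le
  have hg_nonneg : ∀ i : ℕ, ∀ t ∈ Ioc (0:ℝ) 1, 0 ≤ g i t := by
    intro i t ht
    apply mul_nonneg (le_of_lt (by rw [hpow]; exact pow_pos hr0 _))
    split_ifs with h
    · exact hnonneg _ ⟨div_pos ht.1 (hc0 i), h⟩
    · exact hω1
  have hg_le : ∀ i : ℕ, ∀ t ∈ Ioc (0:ℝ) 1, g i t ≤ r ^ (i + 1) * M := by
    intro i t ht
    rw [hg]; dsimp only; rw [hpow]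
    apply mul_le_mul_of_nonneg_left _ (pow_pos hr0 _).le
    split_ifs with h
    · exact hbdd _ ⟨div_pos ht.1 (hc0 i), h⟩
    · exact hbdd 1 ⟨one_pos, le_refl 1⟩
  have hsum_geom : Summable fun i : ℕ => r ^ (i + 1) * M :=
    (((summable_geometric_of_lt_one hr0.le hr1).mul_left r).mul_right M).congr
      (fun i => by rw [pow_succ, mul_comm (r ^ i) r])
  have part1 : ∀ t ∈ Ioc (0:ℝ) 1, Summable (g · t) := by
    intro t ht
    exact Summable.of_nonneg_of_le (fun i => hg_nonneg i t ht) (fun i => hg_le i t ht) hsum_geom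
  refine ⟨part1, ?_⟩
  -- the summands divided by t
  set h : ℕ → ℝ → ℝ := fun i t => g i t / t with hh
  set D : ℝ := ∫ s in Ioc (0:ℝ) 1, ω s / s with hD
  have hD0 : 0 ≤ D := setIntegral_nonneg measurableSet_Ioc fun s hs =>
    div_nonneg (hnonneg s hs) hs.1.le
  -- the rescaled Dini integrand
  set F : ℝ → ℝ := (Ioc (0:ℝ) 1).indicator (fun s => ω s / s) with hF
  have hFint : Integrable F := (integrable_indicator_iff measurableSet_Ioc).2 hDini
  have hFD : ∫ s, F s = D := by rw [hF, integral_indicator measurableSet_Ioc]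
  -- integrability of each piece, and computation of its integral
  have piece1 : ∀ i : ℕ, IntegrableOn (h i) (Ioc 0 (κ ^ (i + 1))) ∧
      ∫ t in Ioc (0:ℝ) (κ ^ (i + 1)), h i t = r ^ (i + 1) * D := by
    intro i
    set c := κ ^ (i + 1) with hcdef
    have hc : (0:ℝ) < c := hc0 i
    have hGint : Integrable (fun t => F (t / c)) := hFint.comp_div hc.ne'
    have heq : EqOn (fun t => r ^ (i + 1) * (F (t / c) / c)) (h i) (Ioc 0 c) := by
      intro t ht
      have htc : t / c ∈ Ioc (0:ℝ) 1 := ⟨div_pos ht.1 hc, (div_le_one hc).2 ht.2⟩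
      have : F (t / c) = ω (t / c) / (t / c) := indicator_of_mem htc _
      simp only [hh, hg, hpow i, ← hcdef]
      rw [if_pos htc.2, this, div_div, div_mul_cancel₀ _ hc.ne', mul_div_assoc]
    have hind : (fun t => F (t / c)) = (Ioc (0:ℝ) c).indicator (fun t => F (t / c)) := by
      funext t
      by_cases ht : t ∈ Ioc (0:ℝ) c
      · rw [indicator_of_mem ht]
      · rw [indicator_of_notMem ht]
        have hni : t / c ∉ Ioc (0:ℝ) 1 := by
          intro hmem
          have ht0 : 0 < t := by
            have := mul_pos hmem.1 hc
            rwa [div_mul_cancel₀ _ hc.ne'] at this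
          exact ht ⟨ht0, (div_le_one hc).1 hmem.2⟩
        rw [hF]
        exact indicator_of_notMem hni _
    constructor
    · exact (((hGint.div_const c).const_mul _).integrableOn).congr_fun heq measurableSet_Ioc
    · rw [← setIntegral_congr_fun measurableSet_Ioc heq]
      rw [MeasureTheory.integral_const_mul, integral_div,
        ← integral_indicator measurableSet_Ioc, ← hind,
        MeasureTheory.Measure.integral_comp_div F c, smul_eq_mul, abs_of_pos hc, hFD,
        mul_div_cancel_left₀ _ hc.ne']
  have piece2 : ∀ i : ℕ, IntegrableOn (h i) (Ioc (κ ^ (i + 1)) 1) ∧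
      ∫ t in Ioc (κ ^ (i + 1)) 1, h i t =
        r ^ (i + 1) * (ω 1 * ((i + 1 : ℝ) * (-Real.log κ))) := by
    intro i
    set c := κ ^ (i + 1) with hcdef
    have hc : (0:ℝ) < c := hc0 i
    have hc1' : c ≤ 1 := hc1 i
    have heq : EqOn (fun t => r ^ (i + 1) * ω 1 * t⁻¹) (h i) (Ioc c 1) := by
      intro t ht
      have h1 : ¬ t / c ≤ 1 := not_le.2 ((one_lt_div hc).2 ht.1)
      simp only [hh, hg, hpow i, ← hcdef]
      rw [if_neg h1, div_eq_mul_inv]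
    have hcont : IntegrableOn (fun t : ℝ => r ^ (i + 1) * ω 1 * t⁻¹) (Ioc c 1) := by
      apply IntegrableOn.mono_set _ Ioc_subset_Icc_self
      apply ContinuousOn.integrableOn_Icc
      exact (continuousOn_const.mul continuousOn_const).mul
        (continuousOn_id.inv₀ fun t ht => (hc.trans_le ht.1).ne')
    have hlog : ∫ t in Ioc c 1, t⁻¹ = (i + 1 : ℝ) * (-Real.log κ) := by
      rw [← intervalIntegral.integral_of_le hc1', integral_inv_of_pos hc one_pos,
        hcdef, one_div, Real.log_inv, Real.log_pow]
      push_cast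
      ring
    constructor
    · exact hcont.congr_fun heq measurableSet_Ioc
    · rw [← setIntegral_congr_fun measurableSet_Ioc heq, MeasureTheory.integral_const_mul, hlog]
      ring
  have hint : ∀ i : ℕ, IntegrableOn (h i) (Ioc 0 1) := by
    intro i
    rw [← Ioc_union_Ioc_eq_Ioc (hc0 i).le (hc1 i)]
    exact (piece1 i).1.union (piece2 i).1
  have hval : ∀ i : ℕ, ∫ t in Ioc (0:ℝ) 1, ‖h i t‖ =
      r ^ (i + 1) * D + r ^ (i + 1) * (ω 1 * ((i + 1 : ℝ) * (-Real.log κ))) := by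
    intro i
    rw [setIntegral_congr_fun measurableSet_Ioc
      (fun t ht => Real.norm_of_nonneg (div_nonneg (hg_nonneg i t ht) ht.1.le)),
      ← Ioc_union_Ioc_eq_Ioc (hc0 i).le (hc1 i),
      setIntegral_union (Ioc_disjoint_Ioc_of_le le_rfl) measurableSet_Ioc (piece1 i).1 (piece2 i).1,
      (piece1 i).2, (piece2 i).2]
  have hrnorm : ‖r‖ < 1 := by rw [Real.norm_eq_abs, abs_of_pos hr0]; exact hr1
  have hsum1 : Summable fun i : ℕ => r ^ (i + 1) * D :=
    (((summable_geometric_of_lt_one hr0.le hr1).mul_left r).mul_right D).congr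
      (fun i => by rw [pow_succ]; ring)
  have hsum2 : Summable fun i : ℕ => r ^ (i + 1) * (ω 1 * ((i + 1 : ℝ) * (-Real.log κ))) := by
    have base : Summable fun n : ℕ => (n : ℝ) ^ 1 * r ^ n :=
      summable_pow_mul_geometric_of_norm_lt_one 1 hrnorm
    have shift : Summable fun n : ℕ => ((n + 1 : ℕ) : ℝ) ^ 1 * r ^ (n + 1) :=
      (summable_nat_add_iff 1).2 base
    exact ((shift.mul_left (ω 1 * (-Real.log κ))).congr
      (fun i => by push_cast; ring))
  have hsumnorm : Summable fun i : ℕ => ∫ t in Ioc (0:ℝ) 1, ‖h i t‖ :=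
    (hsum1.add hsum2).congr (fun i => (hval i).symm)
  have main : Integrable (fun t => ∑' i, h i t) (volume.restrict (Ioc 0 1)) :=
    integrable_tsum_aux hint hsumnorm
  have hfin : ∀ t : ℝ, (∑' i, h i t) = ωt t / t := by
    intro t
    rw [hωt t, ← tsum_div_const]
  exact main.congr (Eventually.of_forall hfin)
end

section
/- Sarason's lemma: Let (X, μ) be a measure space with μ(X) = 1, let v : X → ℝ be measurable with v > 0 a.e., and assume ∫_X v dμ · ∫_X v^{-1} dμ ≤ 1 + c³ for some constant c with 0 < c < 1/2, where both integrals are finite. Then ∫_X |log v − ∫_X log v dμ| dμ ≤ 16c. -/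
open MeasureTheory

lemma logsq_aux {t : ℝ} (ht : 1 ≤ t) : (Real.log t)^2 ≤ 4*(t + t⁻¹ - 2) := by
  set s := Real.sqrt t with hs
  have hs1 : 1 ≤ s := by
    rw [hs]
    exact Real.one_le_sqrt.mpr ht
  have hst : s^2 = t := Real.sq_sqrt (by linarith)
  have hlog : Real.log t = 2 * Real.log s := by
    rw [hs, Real.log_sqrt (by linarith : (0:ℝ) ≤ t)]; ring
  have hls : Real.log s ≤ s - 1 := Real.log_le_sub_one_of_pos (by linarith)
  have hls0 : 0 ≤ Real.log s := Real.log_nonneg hs1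
  have hsq : (Real.log t)^2 ≤ 4*(s-1)^2 := by
    rw [hlog]; nlinarith
  have hspos : (0:ℝ) < s := by linarith
  have key : (s-1)^2 ≤ s^2 + (s^2)⁻¹ - 2 := by
    rw [← sub_nonneg]
    have h1 : s^2 + (s^2)⁻¹ - 2 - (s-1)^2 = ((s-1)^2*(2*s+1))/s^2 := by
      field_simp; ring
    rw [h1]; positivity
  have htinv : t⁻¹ = (s^2)⁻¹ := by rw [hst]
  calc (Real.log t)^2 ≤ 4*(s-1)^2 := hsq
    _ ≤ 4*(t + t⁻¹ - 2) := by rw [← hst]; linarith [key]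

lemma logsq {t : ℝ} (ht : 0 < t) : (Real.log t)^2 ≤ 4*(t + t⁻¹ - 2) := by
  rcases le_or_gt 1 t with hle | hlt
  · exact logsq_aux hle
  · have h1 : 1 ≤ t⁻¹ := by
      rw [le_inv_comm₀ one_pos ht]
      simpa using hlt.le
    have h2 := logsq_aux h1
    rw [Real.log_inv, inv_inv, neg_sq] at h2
    linarith

lemma pos_integral {X : Type*} [MeasurableSpace X] (μ : Measure X) [IsProbabilityMeasure μ]
    (f : X → ℝ) (hf : Integrable f μ) (hpos : ∀ᵐ x ∂μ, 0 < f x) :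
    0 < ∫ x, f x ∂μ := by
  rw [integral_pos_iff_support_of_nonneg_ae (hpos.mono fun x hx => hx.le) hf]
  have h0 : μ (Function.support f)ᶜ = 0 := by
    refine measure_mono_null ?_ (ae_iff.mp hpos)
    intro x hx
    simp only [Set.mem_compl_iff, Function.mem_support, not_not] at hx
    simp [Set.mem_setOf_eq, hx]
  have h1 : (1:ENNReal) ≤ μ (Function.support f) := by
    have h2 := measure_union_le (μ := μ) (Function.support f) (Function.support f)ᶜ
    rw [Set.union_compl_self, measure_univ, h0, add_zero] at h2
    exact h2
  exact lt_of_lt_of_le zero_lt_one h1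

lemma sarason_aux {X : Type*} [MeasurableSpace X] (μ : Measure X) [IsProbabilityMeasure μ]
    (w : X → ℝ) (hmeas : Measurable w) (hpos : ∀ᵐ x ∂μ, 0 < w x)
    (hw : Integrable w μ) (hwinv : Integrable (fun x => (w x)⁻¹) μ)
    (c : ℝ) (hc : 0 < c) (hc2 : c < 1/2)
    (hsum : (∫ x, w x ∂μ) + (∫ x, (w x)⁻¹ ∂μ) ≤ 2 + c ^ 3) :
    Integrable (fun x => Real.log (w x)) μ ∧
      ∫ x, |Real.log (w x) - ∫ y, Real.log (w y) ∂μ| ∂μ ≤ 3 * c := by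
  set u : X → ℝ := fun x => Real.log (w x) with hu
  have humeas : Measurable u := Real.measurable_log.comp hmeas
  have hbound_int : Integrable (fun x => 4*(w x + (w x)⁻¹ - 2)) μ :=
    (((hw.add hwinv).sub (integrable_const 2)).const_mul 4)
  have hptwise : ∀ᵐ x ∂μ, (u x)^2 ≤ 4*(w x + (w x)⁻¹ - 2) :=
    hpos.mono fun x hx => logsq hx
  have hsq_int : Integrable (fun x => (u x)^2) μ := by
    refine hbound_int.mono' ((humeas.pow_const 2).aestronglyMeasurable) ?_
    filter_upwards [hptwise] with x hx
    rw [Real.norm_eq_abs, abs_of_nonneg (sq_nonneg _)]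
    exact hx
  have hsq_le : ∫ x, (u x)^2 ∂μ ≤ 4 * c^3 := by
    have h1 : ∫ x, (u x)^2 ∂μ ≤ ∫ x, 4*(w x + (w x)⁻¹ - 2) ∂μ :=
      integral_mono_ae hsq_int hbound_int hptwise
    have h2 : ∫ x, 4*(w x + (w x)⁻¹ - 2) ∂μ
        = 4*((∫ x, w x ∂μ) + (∫ x, (w x)⁻¹ ∂μ) - 2) := by
      have hadd : Integrable (fun x => w x + (w x)⁻¹) μ := hw.add hwinv
      rw [integral_const_mul, integral_sub hadd (integrable_const 2),
        integral_add hw hwinv, integral_const]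
      simp
    rw [h2] at h1
    nlinarith
  have hu_int : Integrable u μ := by
    have hb1 : Integrable (fun x => 1 + u x ^ 2) μ := (integrable_const 1).add hsq_int
    refine hb1.mono' humeas.aestronglyMeasurable ?_
    filter_upwards with x
    rw [Real.norm_eq_abs]
    nlinarith [sq_abs (u x), sq_nonneg (|u x| - 1)]
  have habs_le : ∫ x, |u x| ∂μ ≤ 3*c/2 := by
    have hpt : ∀ x, 2*c*|u x| ≤ c^2 + (u x)^2 := by
      intro x
      nlinarith [sq_nonneg (|u x| - c), sq_abs (u x)]
    have h1 : ∫ x, 2*c*|u x| ∂μ ≤ ∫ x, (c^2 + (u x)^2) ∂μ :=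
      integral_mono (hu_int.abs.const_mul _) ((integrable_const _).add hsq_int) hpt
    have h2 : ∫ x, 2*c*|u x| ∂μ = 2*c*∫ x, |u x| ∂μ := integral_const_mul _ _
    have h3 : ∫ x, (c^2 + (u x)^2) ∂μ = c^2 + ∫ x, (u x)^2 ∂μ := by
      rw [integral_add (integrable_const _) hsq_int, integral_const]
      simp
    rw [h2, h3] at h1
    nlinarith [mul_pos hc hc]
  refine ⟨hu_int, ?_⟩
  set m := ∫ y, u y ∂μ with hm
  have hmabs : |m| ≤ ∫ x, |u x| ∂μ := by
    have h0 := norm_integral_le_integral_norm (μ := μ) u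
    simpa [Real.norm_eq_abs] using h0
  have h1 : ∫ x, |u x - m| ∂μ ≤ ∫ x, (|u x| + |m|) ∂μ := by
    refine integral_mono (hu_int.sub (integrable_const m)).abs
      (hu_int.abs.add (integrable_const _)) ?_
    intro x
    exact abs_sub (u x) m
  have h2 : ∫ x, (|u x| + |m|) ∂μ = (∫ x, |u x| ∂μ) + |m| := by
    rw [integral_add hu_int.abs (integrable_const _), integral_const]
    simp
  rw [h2] at h1
  linarith

theorem stmt9 {X : Type*} [MeasurableSpace X] (μ : Measure X) [IsProbabilityMeasure μ]
    (v : X → ℝ) (hmeas : Measurable v) (hpos : ∀ᵐ x ∂μ, 0 < v x)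
    (hv : Integrable v μ) (hvinv : Integrable (fun x => (v x)⁻¹) μ)
    (c : ℝ) (hc : 0 < c) (hc2 : c < 1/2)
    (h : (∫ x, v x ∂μ) * ∫ x, (v x)⁻¹ ∂μ ≤ 1 + c ^ 3) :
    ∫ x, |Real.log (v x) - ∫ y, Real.log (v y) ∂μ| ∂μ ≤ 16 * c := by
  set a := ∫ x, v x ∂μ with haDef
  set b := ∫ x, (v x)⁻¹ ∂μ with hbDef
  have ha : 0 < a := pos_integral μ v hv hpos
  have hb : 0 < b := pos_integral μ (fun x => (v x)⁻¹) hvinv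
    (hpos.mono fun x hx => inv_pos.mpr hx)
  set r := Real.sqrt (b/a) with hrDef
  have hr : 0 < r := Real.sqrt_pos.mpr (div_pos hb ha)
  set w : X → ℝ := fun x => v x * r with hwDef
  have hwmeas : Measurable w := hmeas.mul_const r
  have hwpos : ∀ᵐ x ∂μ, 0 < w x := hpos.mono fun x hx => mul_pos hx hr
  have hw_int : Integrable w μ := hv.mul_const r
  have hwinv_eq : (fun x => (w x)⁻¹) = fun x => (v x)⁻¹ * r⁻¹ := by
    funext x; rw [hwDef]; simp [mul_inv, mul_comm]
  have hwinv_int : Integrable (fun x => (w x)⁻¹) μ := by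
    rw [hwinv_eq]; exact hvinv.mul_const r⁻¹
  have hIw : ∫ x, w x ∂μ = a * r := by
    rw [hwDef, integral_mul_const]
  have hIwinv : ∫ x, (w x)⁻¹ ∂μ = b * r⁻¹ := by
    rw [hwinv_eq, integral_mul_const]
  have h1 : a * r = Real.sqrt (a*b) := by
    have hab : a * b = a^2 * (b/a) := by field_simp
    rw [hab, Real.sqrt_mul (sq_nonneg a), Real.sqrt_sq ha.le, hrDef]
  have h2 : b * r⁻¹ = Real.sqrt (a*b) := by
    have hab : a * b = b^2 * (a/b) := by field_simp
    rw [hab, Real.sqrt_mul (sq_nonneg b), Real.sqrt_sq hb.le, hrDef, ← Real.sqrt_inv,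
      inv_div]
  have hsqrt : Real.sqrt (a*b) ≤ 1 + c^3/2 := by
    rw [show (1 + c^3/2) = Real.sqrt ((1+c^3/2)^2) from
      (Real.sqrt_sq (by positivity)).symm]
    exact Real.sqrt_le_sqrt (by nlinarith [h, sq_nonneg (c^3)])
  have hsum : (∫ x, w x ∂μ) + (∫ x, (w x)⁻¹ ∂μ) ≤ 2 + c ^ 3 := by
    rw [hIw, hIwinv, h1, h2]
    linarith
  obtain ⟨hlogw_int, hmain⟩ := sarason_aux μ w hwmeas hwpos hw_int hwinv_int c hc hc2 hsum
  have hlogeq : ∀ᵐ x ∂μ, Real.log (w x) = Real.log (v x) + Real.log r :=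
    hpos.mono fun x hx => Real.log_mul (ne_of_gt hx) (ne_of_gt hr)
  have hlogv_int : Integrable (fun x => Real.log (v x)) μ := by
    have h3 : Integrable (fun x => Real.log (v x) + Real.log r) μ :=
      hlogw_int.congr hlogeq
    have h4 := h3.sub (integrable_const (Real.log r))
    exact h4.congr (ae_of_all μ fun x => by simp)
  have hintlog : ∫ y, Real.log (w y) ∂μ = (∫ y, Real.log (v y) ∂μ) + Real.log r := by
    rw [integral_congr_ae hlogeq, integral_add hlogv_int (integrable_const _),
      integral_const]
    simp
  have hfinal : ∫ x, |Real.log (v x) - ∫ y, Real.log (v y) ∂μ| ∂μ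
      = ∫ x, |Real.log (w x) - ∫ y, Real.log (w y) ∂μ| ∂μ := by
    refine integral_congr_ae ?_
    filter_upwards [hlogeq] with x hx
    rw [hx, hintlog]
    ring_nf
  rw [hfinal]
  linarith
end

section
/- Let φ, ω : (0, r₀] → ℝ≥0 with ω nondecreasing, let β ∈ (0,1) and K ≥ 1, and suppose φ(ρ) ≤ K((ρ/r)^β φ(r) + ω(ρ)) for all 0 < ρ ≤ r ≤ r₀. If moreover ∫_0^{r₀} ω(t)/t dt < ∞ and ω satisfies ω(t) ≤ c₂ ω(s) for t/2 ≤ s ≤ t, then for every r ≤ r₀ the series Σ_{j=0}^∞ φ(2^{-j} r) converges and Σ_{j=0}^∞ φ(2^{-j} r) ≤ C(φ(r) + ∫_0^r ω(t)/t dt), where C depends only on K, β, c₂. -/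
open MeasureTheory Set

theorem stmt17 (K β c₂ : ℝ) (hK : 1 ≤ K) (hβ : β ∈ Ioo (0:ℝ) 1) (hc₂ : 0 < c₂) :
    ∃ C : ℝ, 0 < C ∧ ∀ (r₀ : ℝ), 0 < r₀ → ∀ (φ ω : ℝ → ℝ),
      (∀ r ∈ Ioc (0:ℝ) r₀, 0 ≤ φ r) → (∀ r ∈ Ioc (0:ℝ) r₀, 0 ≤ ω r) →
      MonotoneOn ω (Ioc 0 r₀) →
      (∀ ρ r : ℝ, 0 < ρ → ρ ≤ r → r ≤ r₀ → φ ρ ≤ K * ((ρ / r) ^ β * φ r + ω ρ)) →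
      IntegrableOn (fun t => ω t / t) (Ioc 0 r₀) →
      (∀ t ∈ Ioc (0:ℝ) r₀, ∀ s, t / 2 ≤ s → s ≤ t → ω t ≤ c₂ * ω s) →
      ∀ r ∈ Ioc (0:ℝ) r₀,
        Summable (fun j : ℕ => φ (r / 2 ^ j)) ∧
        ∑' j : ℕ, φ (r / 2 ^ j) ≤ C * (φ r + ∫ t in Ioc (0:ℝ) r, ω t / t) := by
  set θ : ℝ := (1/2 : ℝ) ^ β with hθdef
  have hθ0 : 0 < θ := Real.rpow_pos_of_pos (by norm_num) β
  have hθ1 : θ < 1 := Real.rpow_lt_one (by norm_num) (by norm_num) hβ.1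
  have hK0 : (0:ℝ) < K := lt_of_lt_of_le one_pos hK
  have h1θ : (0:ℝ) < 1 - θ := by linarith
  refine ⟨K * (1 - θ)⁻¹ + K * (2 * c₂ + 2), by positivity, ?_⟩
  intro r₀ hr₀ φ ω hφ0 hω0 hωmono hiter hint hdbl r hrmem
  obtain ⟨hr, hrr₀⟩ := hrmem
  set g : ℝ → ℝ := fun t => ω t / t with hgdef
  -- basic positivity of the points r / 2^j
  have hpt : ∀ j : ℕ, r / 2 ^ j ∈ Ioc (0:ℝ) r₀ := by
    intro j
    constructor
    · positivity
    · calc r / 2 ^ j ≤ r := by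
            apply div_le_self hr.le
            exact one_le_pow₀ (by norm_num)
          _ ≤ r₀ := hrr₀
  have hpt_le : ∀ j : ℕ, r / 2 ^ j ≤ r := fun j =>
    div_le_self hr.le (one_le_pow₀ (by norm_num))
  have hpt_pos : ∀ j : ℕ, 0 < r / 2 ^ j := fun j => by positivity
  -- g is nonneg on Ioc 0 r₀
  have hg0 : ∀ t ∈ Ioc (0:ℝ) r₀, 0 ≤ g t := by
    intro t ht
    exact div_nonneg (hω0 t ht) ht.1.le
  have hIocsub : Ioc (0:ℝ) r ⊆ Ioc (0:ℝ) r₀ := Ioc_subset_Ioc le_rfl hrr₀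
  have hintr : IntegrableOn g (Ioc (0:ℝ) r) := hint.mono_set hIocsub
  set I : ℝ := ∫ t in Ioc (0:ℝ) r, g t with hIdef
  have hI0 : 0 ≤ I := setIntegral_nonneg measurableSet_Ioc (fun t ht => hg0 t (hIocsub ht))
  -- interval integrability on subintervals of (0, r]
  have hii : ∀ a b : ℝ, 0 < a → a ≤ b → b ≤ r → IntervalIntegrable g volume a b := by
    intro a b ha hab hbr
    apply IntegrableOn.intervalIntegrable
    apply hint.mono_set
    rw [uIcc_of_le hab]
    intro x hx
    exact ⟨lt_of_lt_of_le ha hx.1, le_trans (le_trans hx.2 hbr) hrr₀⟩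
  -- lower bound for integrals: ω a * (b - a) / b ≤ ∫_{Ioc a b} g
  have hlow : ∀ a b : ℝ, 0 < a → a ≤ b → b ≤ r →
      ω a * ((b - a) / b) ≤ ∫ t in Ioc a b, g t := by
    intro a b ha hab hbr
    have hb : 0 < b := lt_of_lt_of_le ha hab
    have hsub : Ioc a b ⊆ Ioc (0:ℝ) r₀ := fun x hx =>
      ⟨lt_of_lt_of_le ha hx.1.le, le_trans (le_trans hx.2 hbr) hrr₀⟩
    have hconst : ∫ t in Ioc a b, (ω a / b) = (ω a / b) * (b - a) := by
      rw [setIntegral_const, Real.volume_real_Ioc_of_le hab, smul_eq_mul,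
        mul_comm]
    have hmono : ∫ t in Ioc a b, (ω a / b) ≤ ∫ t in Ioc a b, g t := by
      apply setIntegral_mono_on (integrableOn_const (by
        rw [Real.volume_Ioc]; exact ENNReal.ofReal_ne_top)) (hint.mono_set hsub)
        measurableSet_Ioc
      intro x hx
      have hxmem : x ∈ Ioc (0:ℝ) r₀ := hsub hx
      have hωa : ω a ≤ ω x := hωmono ⟨ha, le_trans (le_trans hab hbr) hrr₀⟩ hxmem hx.1.le
      have hx0 : 0 < x := hxmem.1
      have hωa0 : 0 ≤ ω a := hω0 a ⟨ha, le_trans (le_trans hab hbr) hrr₀⟩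
      show ω a / b ≤ ω x / x
      gcongr
      · linarith
      · exact hx.2
    calc ω a * ((b - a) / b) = (ω a / b) * (b - a) := by ring
      _ ≤ ∫ t in Ioc a b, g t := hconst ▸ hmono
  -- halving of scales
  have hhalf : ∀ j : ℕ, r / 2 ^ (j+1) ≤ r / 2 ^ j := by
    intro j
    apply div_le_div_of_nonneg_left hr.le (by positivity)
    rw [pow_succ]
    nlinarith [pow_pos (show (0:ℝ) < 2 by norm_num) j]
  -- each shifted ω-value is bounded by twice the adjacent integral
  have hstep : ∀ j : ℕ, ω (r / 2 ^ (j+1)) ≤ 2 * ∫ t in Ioc (r / 2 ^ (j+1)) (r / 2 ^ j), g t := by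
    intro j
    have h := hlow (r / 2 ^ (j+1)) (r / 2 ^ j) (hpt_pos (j+1)) (hhalf j) (hpt_le j)
    have hba : (r / 2 ^ j - r / 2 ^ (j+1)) / (r / 2 ^ j) = 1/2 := by
      rw [pow_succ]
      field_simp
      ring
    rw [hba] at h
    linarith
  -- F j = integral from r/2^j to r
  set F : ℕ → ℝ := fun j => ∫ t in (r / 2 ^ j)..r, g t with hFdef
  have hFadj : ∀ j : ℕ, ∫ t in Ioc (r / 2 ^ (j+1)) (r / 2 ^ j), g t = F (j+1) - F j := by
    intro j
    have h1 : IntervalIntegrable g volume (r / 2 ^ (j+1)) (r / 2 ^ j) :=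
      hii _ _ (hpt_pos (j+1)) (hhalf j) (hpt_le j)
    have h2 : IntervalIntegrable g volume (r / 2 ^ j) r :=
      hii _ _ (hpt_pos j) (hpt_le j) le_rfl
    have h3 := intervalIntegral.integral_add_adjacent_intervals h1 h2
    rw [intervalIntegral.integral_of_le (hhalf j)] at h3
    simp only [hFdef]
    linarith
  have hFI : ∀ N : ℕ, F N ≤ I := by
    intro N
    simp only [hFdef]
    rw [intervalIntegral.integral_of_le (hpt_le N)]
    apply setIntegral_mono_set hintr
    · exact (ae_restrict_mem measurableSet_Ioc).mono (fun x hx => hg0 x (hIocsub hx))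
    · exact HasSubset.Subset.eventuallyLE (Ioc_subset_Ioc (hpt_pos N).le le_rfl)
  have hF0 : F 0 = 0 := by simp [hFdef]
  -- partial sums of shifted ω-values
  have hshiftsum : ∀ N : ℕ, ∑ j ∈ Finset.range N, ω (r / 2 ^ (j+1)) ≤ 2 * I := by
    intro N
    calc ∑ j ∈ Finset.range N, ω (r / 2 ^ (j+1))
        ≤ ∑ j ∈ Finset.range N, 2 * (F (j+1) - F j) := by
          apply Finset.sum_le_sum
          intro j _
          rw [← hFadj j]
          exact hstep j
      _ = 2 * (F N - F 0) := by rw [← Finset.mul_sum, Finset.sum_range_sub]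
      _ ≤ 2 * I := by rw [hF0]; linarith [hFI N]
  have hshift_nonneg : ∀ j : ℕ, 0 ≤ ω (r / 2 ^ (j+1)) := fun j => hω0 _ (hpt (j+1))
  have hshift_summ : Summable (fun j : ℕ => ω (r / 2 ^ (j+1))) :=
    summable_of_sum_range_le hshift_nonneg hshiftsum
  have ha_summ : Summable (fun j : ℕ => ω (r / 2 ^ j)) := (summable_nat_add_iff 1).mp hshift_summ
  -- bound on ω r
  have hωr : ω r ≤ 2 * c₂ * I := by
    have h1 : ω r ≤ c₂ * ω (r / 2) := hdbl r ⟨hr, hrr₀⟩ (r / 2) le_rfl (by linarith)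
    have h2 := hlow (r / 2) r (by positivity) (by linarith) le_rfl
    have hba : (r - r / 2) / r = 1/2 := by field_simp; ring
    rw [hba] at h2
    have h3 : ∫ t in Ioc (r/2) r, g t ≤ I := by
      apply setIntegral_mono_set hintr
      · exact (ae_restrict_mem measurableSet_Ioc).mono (fun x hx => hg0 x (hIocsub hx))
      · exact HasSubset.Subset.eventuallyLE (Ioc_subset_Ioc (by positivity) le_rfl)
    have hω2 : 0 ≤ ω (r / 2) := hω0 _ ⟨by positivity, by linarith⟩
    nlinarith
  have ha_tsum : ∑' j : ℕ, ω (r / 2 ^ j) ≤ (2 * c₂ + 2) * I := by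
    rw [Summable.tsum_eq_zero_add ha_summ]
    have h1 : ∑' j : ℕ, ω (r / 2 ^ (j+1)) ≤ 2 * I :=
      Summable.tsum_le_of_sum_range_le hshift_summ hshiftsum
    have h2 : ω (r / 2 ^ (0:ℕ)) = ω r := by norm_num
    rw [h2]
    linarith
  -- the iteration estimate at dyadic scales
  have hφj : ∀ j : ℕ, φ (r / 2 ^ j) ≤ K * (θ ^ j * φ r + ω (r / 2 ^ j)) := by
    intro j
    have h := hiter (r / 2 ^ j) r (hpt_pos j) (hpt_le j) hrr₀
    have hq : r / 2 ^ j / r = (1/2 : ℝ) ^ j := by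
      rw [div_right_comm, div_self hr.ne', div_pow, one_pow]
    have hpow : ((1/2 : ℝ) ^ j) ^ β = θ ^ j := by
      rw [← Real.rpow_natCast (1/2 : ℝ) j, ← Real.rpow_mul (by norm_num), mul_comm,
        Real.rpow_mul (by norm_num), Real.rpow_natCast]
    rw [hq, hpow] at h
    exact h
  -- summability and final bound
  have hgeo : Summable (fun j : ℕ => θ ^ j) := summable_geometric_of_lt_one hθ0.le hθ1
  have hb_summ : Summable (fun j : ℕ => K * (θ ^ j * φ r + ω (r / 2 ^ j))) :=
    ((hgeo.mul_right (φ r)).add ha_summ).mul_left K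
  have hsum : Summable (fun j : ℕ => φ (r / 2 ^ j)) :=
    Summable.of_nonneg_of_le (fun j => hφ0 _ (hpt j)) hφj hb_summ
  refine ⟨hsum, ?_⟩
  have hφr0 : 0 ≤ φ r := hφ0 r ⟨hr, hrr₀⟩
  have h1 : ∑' j : ℕ, φ (r / 2 ^ j) ≤ ∑' j : ℕ, K * (θ ^ j * φ r + ω (r / 2 ^ j)) :=
    Summable.tsum_le_tsum hφj hsum hb_summ
  have h2 : ∑' j : ℕ, K * (θ ^ j * φ r + ω (r / 2 ^ j))
      = K * ((1 - θ)⁻¹ * φ r + ∑' j : ℕ, ω (r / 2 ^ j)) := by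
    rw [tsum_mul_left, Summable.tsum_add (hgeo.mul_right (φ r)) ha_summ, tsum_mul_right,
      tsum_geometric_of_lt_one hθ0.le hθ1]
  have hinv : 0 < (1 - θ)⁻¹ := inv_pos.2 h1θ
  have h3 : K * ((1 - θ)⁻¹ * φ r + ∑' j : ℕ, ω (r / 2 ^ j))
      ≤ (K * (1 - θ)⁻¹ + K * (2 * c₂ + 2)) * (φ r + I) := by
    nlinarith [mul_le_mul_of_nonneg_left ha_tsum hK0.le,
      mul_nonneg (mul_nonneg hK0.le hinv.le) hI0,
      mul_nonneg (mul_nonneg hK0.le (by linarith : (0:ℝ) ≤ 2 * c₂ + 2)) hφr0]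
  calc ∑' j : ℕ, φ (r / 2 ^ j) ≤ K * ((1 - θ)⁻¹ * φ r + ∑' j : ℕ, ω (r / 2 ^ j)) := by
        rw [← h2]; exact h1
    _ ≤ (K * (1 - θ)⁻¹ + K * (2 * c₂ + 2)) * (φ r + I) := h3
end
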